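/- The separable state x_SEP ∈ H₃ (with x_SEP(0,0,0) = 1 and all other entries 0) and the bi-separable Bell state x_{B1} ∈ H₃ (with x_{B1}(a,b,c) = 1/√2 for (a,b,c) ∈ {(0,0,0),(0,1,1)} and 0 otherwise) both lie in X_W, the topological closure in H₃ of the W SLOCC class. -/
import Mathlib


open scoped BigOperators

/-- The three-qubit Hilbert space. -/
abbrev H3 := (Fin 2 × Fin 2 × Fin 2) → ℂ

/-- Squared Hermitian norm of a vector in `H3`. -/
noncomputable def normSq3 (v : H3) : ℝ := ∑ x : Fin 2 × Fin 2 × Fin 2, Complex.normSq (v x)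

/-- First one-qubit reduced density matrix. -/
noncomputable def rho1 (v : H3) : Matrix (Fin 2) (Fin 2) ℂ :=
  Matrix.of fun a a' => ∑ b : Fin 2, ∑ c : Fin 2, v (a, b, c) * star (v (a', b, c))

/-- Second one-qubit reduced density matrix. -/
noncomputable def rho2 (v : H3) : Matrix (Fin 2) (Fin 2) ℂ :=
  Matrix.of fun b b' => ∑ a : Fin 2, ∑ c : Fin 2, v (a, b, c) * star (v (a, b', c))

/-- Third one-qubit reduced density matrix. -/
noncomputable def rho3 (v : H3) : Matrix (Fin 2) (Fin 2) ℂ :=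
  Matrix.of fun c c' => ∑ a : Fin 2, ∑ b : Fin 2, v (a, b, c) * star (v (a, b, c'))

/-- Minimal (real) eigenvalue of a 2×2 complex matrix. -/
noncomputable def minEig (ρ : Matrix (Fin 2) (Fin 2) ℂ) : ℝ :=
  sInf {t : ℝ | (t : ℂ) ∈ spectrum ℂ ρ}

noncomputable def p1 (v : H3) : ℝ := minEig (rho1 v)
noncomputable def p2 (v : H3) : ℝ := minEig (rho2 v)
noncomputable def p3 (v : H3) : ℝ := minEig (rho3 v)

/-- The action of a triple of 2×2 matrices on `H3` by the tensor product. -/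
noncomputable def tensor3 (A1 A2 A3 : Matrix (Fin 2) (Fin 2) ℂ) (v : H3) : H3 :=
  fun x => ∑ a' : Fin 2, ∑ b' : Fin 2, ∑ c' : Fin 2,
    A1 x.1 a' * A2 x.2.1 b' * A3 x.2.2 c' * v (a', b', c')

/-- Local unitary equivalence of three-qubit states. -/
def LUequiv (v w : H3) : Prop :=
  ∃ U1 U2 U3 : Matrix (Fin 2) (Fin 2) ℂ,
    U1 ∈ Matrix.unitaryGroup (Fin 2) ℂ ∧ U2 ∈ Matrix.unitaryGroup (Fin 2) ℂ ∧
    U3 ∈ Matrix.unitaryGroup (Fin 2) ℂ ∧ w = tensor3 U1 U2 U3 v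

/-- The three-qubit W state. -/
noncomputable def wState : H3 := fun x =>
  if (x.1 = 1 ∧ x.2.1 = 0 ∧ x.2.2 = 0) ∨ (x.1 = 0 ∧ x.2.1 = 1 ∧ x.2.2 = 0) ∨
      (x.1 = 0 ∧ x.2.1 = 0 ∧ x.2.2 = 1)
  then ((1 / Real.sqrt 3 : ℝ) : ℂ) else 0

/-- The SLOCC class of the W state. -/
def WClass : Set H3 :=
  {v | ∃ (A1 A2 A3 : Matrix (Fin 2) (Fin 2) ℂ) (l : ℂ),
    A1.det = 1 ∧ A2.det = 1 ∧ A3.det = 1 ∧ l ≠ 0 ∧ v = l • tensor3 A1 A2 A3 wState}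

/-- The separable state `x_SEP = |000⟩`. -/
noncomputable def xSEP : H3 := fun x =>
  if x = ((0 : Fin 2), (0 : Fin 2), (0 : Fin 2)) then 1 else 0

/-- The bi-separable Bell state `x_{B1}`. -/
noncomputable def xB1 : H3 := fun x =>
  if x = ((0 : Fin 2), (0 : Fin 2), (0 : Fin 2)) ∨ x = ((0 : Fin 2), (1 : Fin 2), (1 : Fin 2))
  then ((1 / Real.sqrt 2 : ℝ) : ℂ) else 0

/- ### Auxiliary material -/

noncomputable def eB1 : H3 := fun x =>
  if x.1 = 0 then 0
  else (if x.2.1 = 0 then 1 else Complex.I) * (if x.2.2 = 0 then 1 else Complex.I)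

lemma aux_sqrt3_ne : ((Real.sqrt 3 : ℝ) : ℂ) ≠ 0 := by
  simp [Complex.ofReal_ne_zero, Real.sqrt_ne_zero']

lemma aux_sqrt2_ne : ((Real.sqrt 2 : ℝ) : ℂ) ≠ 0 := by
  simp [Complex.ofReal_ne_zero, Real.sqrt_ne_zero']

lemma aux_sqrt3_sq : ((Real.sqrt 3 : ℝ) : ℂ) * ((Real.sqrt 3 : ℝ) : ℂ) = 3 := by
  rw [← Complex.ofReal_mul, Real.mul_self_sqrt (by norm_num)]; norm_num

lemma aux_sqrt2_sq : ((Real.sqrt 2 : ℝ) : ℂ) * ((Real.sqrt 2 : ℝ) : ℂ) = 2 := by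
  rw [← Complex.ofReal_mul, Real.mul_self_sqrt (by norm_num)]; norm_num

set_option maxHeartbeats 2000000 in
lemma sep_family (b : ℂ) (hb : b ≠ 0) :
    xSEP + (((Real.sqrt 3 : ℝ) : ℂ) * b)⁻¹ • wState ∈ WClass := by
  have h3 := aux_sqrt3_ne
  have h3' := aux_sqrt3_sq
  refine ⟨!![1, b; 0, 1], !![1, b; 0, 1], !![1, b; 0, 1],
    ((Real.sqrt 3 : ℝ) : ℂ) / (3 * b), ?_, ?_, ?_, ?_, ?_⟩
  · simp [Matrix.det_fin_two_of]
  · simp [Matrix.det_fin_two_of]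
  · simp [Matrix.det_fin_two_of]
  · exact div_ne_zero h3 (by simp [hb])
  · funext x
    obtain ⟨p, q, r⟩ := x
    fin_cases p <;> fin_cases q <;> fin_cases r <;>
      simp [tensor3, wState, xSEP, Fin.sum_univ_two, Pi.add_apply, Pi.smul_apply,
        smul_eq_mul, Prod.ext_iff] <;>
      field_simp <;> ring_nf <;>
      first
        | rfl
        | rw [sq, h3']

set_option maxHeartbeats 2000000 in
lemma bell_family (a : ℂ) (ha : a ≠ 0) :
    xB1 + (Complex.I * ((Real.sqrt 2 : ℝ) : ℂ) * a ^ 2)⁻¹ • eB1 ∈ WClass := by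
  have h3 := aux_sqrt3_ne
  have h2 := aux_sqrt2_ne
  have h3' := aux_sqrt3_sq
  have h2' := aux_sqrt2_sq
  refine ⟨!![a, 0; 0, a⁻¹], !![1, Complex.I / 2; Complex.I, 1 / 2],
    !![1, Complex.I / 2; Complex.I, 1 / 2],
    ((Real.sqrt 3 : ℝ) : ℂ) / (a * Complex.I * ((Real.sqrt 2 : ℝ) : ℂ)), ?_, ?_, ?_, ?_, ?_⟩
  · simp [Matrix.det_fin_two_of, mul_inv_cancel₀ ha]
  · simp [Matrix.det_fin_two_of]
    rw [div_mul_eq_mul_div, Complex.I_mul_I]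
    norm_num
  · simp [Matrix.det_fin_two_of]
    rw [div_mul_eq_mul_div, Complex.I_mul_I]
    norm_num
  · exact div_ne_zero h3 (by simp [ha, Complex.I_ne_zero, h2])
  · funext x
    obtain ⟨p, q, r⟩ := x
    fin_cases p <;> fin_cases q <;> fin_cases r <;>
      simp [tensor3, wState, xB1, eB1, Fin.sum_univ_two, Pi.add_apply, Pi.smul_apply,
        smul_eq_mul, Prod.ext_iff] <;>
      field_simp <;> ring_nf <;>
      (try simp [Complex.I_sq, sq, h3', h2']) <;> (try ring_nf) <;>
      (try simp [Complex.I_sq, sq, h3', h2']) <;> (try ring_nf)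

open Filter in
lemma closure_helper (x e : H3) (c : ℕ → ℂ) (hc : Tendsto c atTop (nhds 0))
    (hmem : ∀ n, x + c n • e ∈ WClass) : x ∈ closure WClass := by
  have h0 : Tendsto (fun n => x + c n • e) atTop (nhds (x + (0 : ℂ) • e)) :=
    Tendsto.add tendsto_const_nhds (hc.smul_const e)
  have ht : Tendsto (fun n => x + c n • e) atTop (nhds x) := by simpa using h0
  exact mem_closure_of_tendsto ht (Eventually.of_forall hmem)

open Filter in
lemma inv_nat_succ_tendsto : Tendsto (fun n : ℕ => (((n : ℂ)) + 1)⁻¹) atTop (nhds 0) := by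
  have h := (Complex.continuous_ofReal.tendsto 0).comp tendsto_one_div_add_atTop_nhds_zero_nat
  have : (fun n : ℕ => (((1 / ((n : ℝ) + 1) : ℝ)) : ℂ)) = fun n : ℕ => (((n : ℂ)) + 1)⁻¹ := by
    funext n; push_cast; rw [one_div]
  rw [← this]
  simpa [Function.comp_def] using h

/-- the separable state and the bi-separable Bell state lie in the
topological closure of the W SLOCC class. -/
theorem sep_and_bell_states_lie_in_closure_of_W_class :
    xSEP ∈ closure WClass ∧ xB1 ∈ closure WClass := by
  have hnz : ∀ n : ℕ, ((n : ℂ) + 1) ≠ 0 := by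
    intro n
    have h : ((n + 1 : ℕ) : ℂ) ≠ 0 := Nat.cast_ne_zero.2 (Nat.succ_ne_zero n)
    push_cast at h
    exact h
  constructor
  · refine closure_helper xSEP wState
      (fun n => (((Real.sqrt 3 : ℝ) : ℂ) * ((n : ℂ) + 1))⁻¹) ?_ ?_
    · have : (fun n : ℕ => (((Real.sqrt 3 : ℝ) : ℂ) * ((n : ℂ) + 1))⁻¹)
          = fun n : ℕ => ((Real.sqrt 3 : ℝ) : ℂ)⁻¹ * (((n : ℂ)) + 1)⁻¹ := by
        funext n; simp [mul_inv, sq]; ring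
      rw [this]
      simpa using (inv_nat_succ_tendsto.const_mul (((Real.sqrt 3 : ℝ) : ℂ)⁻¹))
    · exact fun n => sep_family ((n : ℂ) + 1) (hnz n)
  · refine closure_helper xB1 eB1
      (fun n => (Complex.I * ((Real.sqrt 2 : ℝ) : ℂ) * ((n : ℂ) + 1) ^ 2)⁻¹) ?_ ?_
    · have : (fun n : ℕ => (Complex.I * ((Real.sqrt 2 : ℝ) : ℂ) * ((n : ℂ) + 1) ^ 2)⁻¹)
          = fun n : ℕ => (Complex.I * ((Real.sqrt 2 : ℝ) : ℂ))⁻¹ *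
              ((((n : ℂ)) + 1)⁻¹ * (((n : ℂ)) + 1)⁻¹) := by
        funext n; simp [mul_inv, sq]; ring
      rw [this]
      simpa using ((inv_nat_succ_tendsto.mul inv_nat_succ_tendsto).const_mul
        ((Complex.I * ((Real.sqrt 2 : ℝ) : ℂ))⁻¹))
    · exact fun n => bell_family ((n : ℂ) + 1) (hnz n)
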